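/- arXiv:1501.06518 — 2 statements merged into one kernel-verified Lean document; each statement's English description precedes it below -/
import Mathlib

section
/- Let M be a finite matroid and let M' be a minor of M (a matroid obtained from M by a sequence of deletions and contractions of elements). If M has a depth-decomposition of depth at most d, then M' has a depth-decomposition of depth at most d. In particular, the branch-depth of M' is at most the branch-depth of M. -/
/-!
Common definitions: rooted trees (encoded by a parent function), their depth,
depth-decompositions of matroids, matroid rank, circuits, contraction,
connectivity and components.
-/

/-- `u` is an ancestor of `v` (or equal to it) in the rooted tree encoded by `parent`. -/
def Anc {V : Type} (parent : V → V) (u v : V) : Prop := ∃ n : ℕ, parent^[n] v = u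

/-- `(root, parent)` encodes a rooted tree: the root is its own parent and every
vertex reaches the root by iterating `parent` (each non-root vertex is joined to its
parent by an edge). -/
def IsRootedTree {V : Type} (root : V) (parent : V → V) : Prop :=
  parent root = root ∧ ∀ v : V, ∃ n : ℕ, parent^[n] v = root

/-- The depth of a vertex in a rooted tree: the number of edges on the path from the
root to the vertex. -/
noncomputable def vdepth {V : Type} (root : V) (parent : V → V) (v : V) : ℕ :=
  sInf {n : ℕ | parent^[n] v = root}

/-- The depth of a rooted tree: the maximum number of edges on a path from the root
to a leaf, i.e. the maximal depth of a vertex. -/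
noncomputable def treeDepth {V : Type} (root : V) (parent : V → V) : ℕ :=
  sSup (Set.range (vdepth root parent))

/-- A leaf of a rooted tree: a vertex that is the parent of no other vertex. -/
def IsLeaf {V : Type} (parent : V → V) (v : V) : Prop := ∀ u : V, u ≠ v → parent u ≠ v

/-- The rank of a set `X` in a matroid `M`: the largest size of an independent subset
of `X`. -/
noncomputable def mrank {α : Type} (M : Matroid α) (X : Set α) : ℕ :=
  sSup {n : ℕ | ∃ I : Set α, I ⊆ X ∧ M.Indep I ∧ I.ncard = n}

/-- `(root, parent, f)` is a depth-decomposition of the matroid `M`: the tree is finite,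
the rank of `M` equals the number of edges of the tree (one edge per non-root vertex),
and the rank of any `X ⊆ M.E` is at most the number of edges of the union `T*(X)` of
the paths from the root to the vertices of `f(X)` (one edge per non-root vertex that is
an ancestor of, or equal to, some vertex of `f(X)`). -/
def IsDepthDecomp {α V : Type} (M : Matroid α) (root : V) (parent : V → V)
    (f : α → V) : Prop :=
  Finite V ∧ IsRootedTree root parent ∧
  mrank M M.E = Set.ncard {v : V | v ≠ root} ∧
  ∀ X : Set α, X ⊆ M.E →
    mrank M X ≤ Set.ncard {v : V | v ≠ root ∧ ∃ e ∈ X, Anc parent v (f e)}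

/-- `M` has a depth-decomposition of depth at most `d`. -/
def HasDepthDecompOfDepthLE {α : Type} (M : Matroid α) (d : ℕ) : Prop :=
  ∃ (V : Type) (root : V) (parent : V → V) (f : α → V),
    IsDepthDecomp M root parent f ∧ treeDepth root parent ≤ d

/-- The branch-depth of a matroid: the smallest depth of a depth-decomposition. -/
noncomputable def branchDepth {α : Type} (M : Matroid α) : ℕ :=
  sInf {d : ℕ | HasDepthDecompOfDepthLE M d}

/-- A circuit of a matroid: a minimal dependent set. -/
def IsCircuitOf {α : Type} (M : Matroid α) (C : Set α) : Prop :=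
  M.Dep C ∧ ∀ D : Set α, M.Dep D → D ⊆ C → D = C

/-- `N` is the contraction `M / F` of the matroid `M` by the set `F`: the ground set of
`N` is `M.E \ F`, and a set `I` disjoint from `F` is independent in `N` if and only if
`r(F ∪ I) = r(F) + |I|`. -/
def IsContractionBy {α : Type} (M : Matroid α) (F : Set α) (N : Matroid α) : Prop :=
  N.E = M.E \ F ∧
  ∀ I : Set α, N.Indep I ↔
    I ⊆ M.E \ F ∧ I.Finite ∧ mrank M (F ∪ I) = mrank M F + I.ncard

/-- A matroid is connected if its ground set is nonempty and any two distinct elements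
lie in a common circuit. -/
def IsConnectedM {α : Type} (M : Matroid α) : Prop :=
  M.E.Nonempty ∧
  ∀ x ∈ M.E, ∀ y ∈ M.E, x = y ∨ ∃ C : Set α, IsCircuitOf M C ∧ x ∈ C ∧ y ∈ C

/-- A component of a matroid: an equivalence class of the relation "equal or lying in a
common circuit" on the ground set. -/
def IsComponentOf {α : Type} (M : Matroid α) (K : Set α) : Prop :=
  ∃ x ∈ M.E,
    K = {y ∈ M.E | x = y ∨ ∃ C : Set α, IsCircuitOf M C ∧ x ∈ C ∧ y ∈ C}

/-- One step of taking a minor: contract a single element or delete a single element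
(deletion is restriction to the complement). -/
def MinorStep {α : Type} (M N : Matroid α) : Prop :=
  ∃ e ∈ M.E, IsContractionBy M {e} N ∨ N = M.restrict (M.E \ {e})

/-- `N` is a minor of `M`: `N` is obtained from `M` by a sequence of deletions and
contractions of elements. -/
def IsMinorOf {α : Type} (N M : Matroid α) : Prop :=
  Relation.ReflTransGen (fun A B : Matroid α => MinorStep A B) M N

/-!
It suffices to treat one deletion or contraction of an element `e`. If the minor `N` has the
same rank as `M`, the decomposition of `M` works for `N` unchanged, as ranks only decrease.
Otherwise `e` is a non-loop and `N = M ／ e` (deleting a coloop is contracting it), so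
`r_N(X) + 1 = r_M(X ∪ e)`. As `r_M(e) = 1`, `f e` is not the root; contract the tree edge
between `f e` and its parent. The tree loses one edge, and `T*(X)` loses one edge exactly when
`f e ∈ T*(X)`; in that case `T*(X ∪ e) = T*(X)` and `r_N(X) + 1 = r_M(X ∪ e) ≤ |T*(X)|`.
Contracting an edge does not increase the depth.
-/

open Set

section RootedTree

variable {V : Type} {root : V} {parent : V → V} {u v w x : V}

theorem Anc.refl (parent : V → V) (v : V) : Anc parent v v := ⟨0, rfl⟩

theorem anc_parent (parent : V → V) (v : V) : Anc parent (parent v) v := ⟨1, rfl⟩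

theorem Anc.trans (huv : Anc parent u v) (hvx : Anc parent v x) : Anc parent u x := by
  obtain ⟨m, rfl⟩ := huv
  obtain ⟨n, rfl⟩ := hvx
  exact ⟨m + n, Function.iterate_add_apply _ _ _ _⟩

theorem IsRootedTree.eq_root_of_anc (hT : IsRootedTree root parent) (h : Anc parent v root) :
    v = root := by
  obtain ⟨n, rfl⟩ := h
  exact Function.iterate_fixed hT.1 n

theorem IsRootedTree.parent_ne_self (hT : IsRootedTree root parent) (hw : w ≠ root) :
    parent w ≠ w := by
  intro h
  obtain ⟨n, hn⟩ := hT.2 w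
  exact hw (Function.iterate_fixed h n ▸ hn)

theorem vdepth_le_of_iterate_eq {n : ℕ} (h : parent^[n] v = root) : vdepth root parent v ≤ n :=
  Nat.sInf_le h

theorem IsRootedTree.iterate_vdepth (hT : IsRootedTree root parent) (v : V) :
    parent^[vdepth root parent v] v = root :=
  Nat.sInf_mem (hT.2 v)

theorem vdepth_le_treeDepth [Finite V] (v : V) : vdepth root parent v ≤ treeDepth root parent :=
  le_csSup (finite_range _).bddAbove (mem_range_self v)

theorem treeDepth_le_of_forall_vdepth_le {d : ℕ} (h : ∀ v, vdepth root parent v ≤ d) :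
    treeDepth root parent ≤ d :=
  csSup_le' (forall_mem_range.2 h)

/-- The vertices of `T*(X)` other than the root, one for each edge of `T*(X)`. -/
def nonrootAncestors {α : Type} (root : V) (parent : V → V) (f : α → V) (X : Set α) : Set V :=
  {v | v ≠ root ∧ ∃ e ∈ X, Anc parent v (f e)}

theorem nonrootAncestors_insert_of_mem {α : Type} {f : α → V} {X : Set α} {e : α}
    (he : f e ∈ nonrootAncestors root parent f X) :
    nonrootAncestors root parent f (insert e X) = nonrootAncestors root parent f X := by
  obtain ⟨-, a, ha, hea⟩ := he
  ext v
  simp only [nonrootAncestors, mem_ofPred_eq, exists_mem_insert]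
  refine and_congr_right fun _ => ⟨?_, Or.inr⟩
  rintro (hve | h)
  exacts [⟨a, ha, hve.trans hea⟩, h]

theorem nonrootAncestors_singleton_of_root {α : Type} {f : α → V} {e : α}
    (hT : IsRootedTree root parent) (he : f e = root) :
    nonrootAncestors root parent f {e} = ∅ := by
  simp only [nonrootAncestors, mem_singleton_iff, exists_eq_left, he]
  exact eq_empty_of_forall_notMem fun v hv => hv.1 (hT.eq_root_of_anc hv.2)

theorem ncard_preimage_subtype_ne (S : Set V) (w : V) :
    (Subtype.val ⁻¹' S : Set {v // v ≠ w}).ncard = (S \ {w}).ncard := by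
  rw [← ncard_image_of_injective _ Subtype.val_injective, image_preimage_eq_inter_range,
    Subtype.range_coe_subtype, sdiff_eq]
  rfl

end RootedTree

section MergeIntoParent

variable {V : Type} {root : V} {parent : V → V} {w u : V} (hw : parent w ≠ w)

open Classical in
/-- Contracting the edge between `w` and its parent identifies `w` with `parent w`. -/
noncomputable def mergeIntoParent (hw : parent w ≠ w) (u : V) : {v // v ≠ w} :=
  if h : u = w then ⟨parent w, hw⟩ else ⟨u, h⟩

noncomputable def mergedParent (hw : parent w ≠ w) (v : {v // v ≠ w}) : {v // v ≠ w} :=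
  mergeIntoParent hw (parent v)

theorem mergeIntoParent_of_ne (hu : u ≠ w) : mergeIntoParent hw u = ⟨u, hu⟩ :=
  dif_neg hu

theorem mergeIntoParent_self : mergeIntoParent hw w = mergeIntoParent hw (parent w) := by
  rw [mergeIntoParent_of_ne hw hw, mergeIntoParent, dif_pos rfl]

theorem anc_val_mergeIntoParent (u : V) : Anc parent (mergeIntoParent hw u).1 u := by
  by_cases hu : u = w
  · subst hu
    rw [mergeIntoParent_self, mergeIntoParent_of_ne hw hw]
    exact anc_parent parent u
  · rw [mergeIntoParent_of_ne hw hu]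
    exact Anc.refl parent u

theorem Anc.val_of_mergedParent {x y : {v // v ≠ w}} (h : Anc (mergedParent hw) y x) :
    Anc parent y.1 x.1 := by
  obtain ⟨n, rfl⟩ := h
  induction n generalizing x with
  | zero => exact Anc.refl parent x.1
  | succ n ih =>
    rw [Function.iterate_succ_apply]
    exact ih.trans ((anc_val_mergeIntoParent hw _).trans (anc_parent parent x.1))

theorem exists_iterate_mergedParent {n : ℕ} {v : V} (hv : v ≠ w) (h : parent^[n] u = v) :
    ∃ m ≤ n, (mergedParent hw)^[m] (mergeIntoParent hw u) = ⟨v, hv⟩ := by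
  induction n generalizing u with
  | zero => exact ⟨0, le_rfl, by subst h; exact mergeIntoParent_of_ne hw hv⟩
  | succ n ih =>
    obtain ⟨m, hmn, hm⟩ := ih (Function.iterate_succ_apply _ _ _ ▸ h)
    by_cases hu : u = w
    · subst hu
      exact ⟨m, hmn.trans n.le_succ, by rwa [mergeIntoParent_self]⟩
    · refine ⟨m + 1, Nat.succ_le_succ hmn, ?_⟩
      rwa [Function.iterate_succ_apply, mergeIntoParent_of_ne hw hu]

theorem anc_mergedParent_iff {v : V} (hv : v ≠ w) :
    Anc (mergedParent hw) ⟨v, hv⟩ (mergeIntoParent hw u) ↔ Anc parent v u := by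
  refine ⟨fun h => (h.val_of_mergedParent hw).trans (anc_val_mergeIntoParent hw u), ?_⟩
  rintro ⟨n, hn⟩
  obtain ⟨m, -, hm⟩ := exists_iterate_mergedParent hw hv hn
  exact ⟨m, hm⟩

theorem isRootedTree_mergedParent (hT : IsRootedTree root parent) (hw : w ≠ root) :
    IsRootedTree ⟨root, hw.symm⟩ (mergedParent (hT.parent_ne_self hw)) := by
  refine ⟨?_, fun ⟨v, hv⟩ => ?_⟩
  · rw [mergedParent, hT.1, mergeIntoParent_of_ne]
  · have := (anc_mergedParent_iff (hT.parent_ne_self hw) hw.symm (u := v)).2 (hT.2 v)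
    rwa [mergeIntoParent_of_ne _ hv] at this

theorem treeDepth_mergedParent_le [Finite V] (hT : IsRootedTree root parent) (hw : w ≠ root) :
    treeDepth ⟨root, hw.symm⟩ (mergedParent (hT.parent_ne_self hw)) ≤ treeDepth root parent := by
  refine treeDepth_le_of_forall_vdepth_le fun ⟨v, hv⟩ => ?_
  obtain ⟨m, hm, hroot⟩ :=
    exists_iterate_mergedParent (hT.parent_ne_self hw) hw.symm (hT.iterate_vdepth v)
  rw [mergeIntoParent_of_ne _ hv] at hroot
  exact (vdepth_le_of_iterate_eq hroot).trans (hm.trans (vdepth_le_treeDepth v))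

theorem nonrootAncestors_mergedParent {α : Type} (f : α → V) (X : Set α) (hwr : w ≠ root) :
    nonrootAncestors ⟨root, hwr.symm⟩ (mergedParent hw) (mergeIntoParent hw ∘ f) X =
      Subtype.val ⁻¹' nonrootAncestors root parent f X := by
  ext ⟨v, hv⟩
  simp only [nonrootAncestors, mem_ofPred_eq, mem_preimage, ne_eq, Subtype.mk.injEq,
    Function.comp_apply, anc_mergedParent_iff hw hv]

end MergeIntoParent

namespace Matroid

variable {α : Type} {M : Matroid α} {X C : Set α} {e : α}

theorem cast_mrank [M.RankFinite] (X : Set α) : (mrank M X : ℕ∞) = M.eRk X := by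
  obtain ⟨I, hI⟩ := M.exists_isBasis' X
  have hIfin : I.Finite := hI.indep.finite
  suffices mrank M X = I.ncard by rw [this, hIfin.cast_ncard_eq, hI.encard_eq_eRk]
  refine IsGreatest.csSup_eq ⟨⟨I, hI.subset, hI.indep, rfl⟩, ?_⟩
  rintro _ ⟨J, hJX, hJ, rfl⟩
  have hJI : J.encard ≤ I.encard := hI.encard_eq_eRk ▸ hJ.encard_le_eRk_of_subset hJX
  rwa [← hJ.finite.cast_ncard_eq, ← hIfin.cast_ncard_eq, Nat.cast_le] at hJI

theorem mrank_insert_le [M.RankFinite] (e : α) (X : Set α) :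
    mrank M (insert e X) ≤ mrank M X + 1 := by
  have := M.eRk_insert_le_add_one e X
  rwa [← cast_mrank, ← cast_mrank, ← Nat.cast_one, ← Nat.cast_add, Nat.cast_le] at this

theorem mrank_delete [M.RankFinite] (hX : X ⊆ M.E \ C) : mrank (M ＼ C) X = mrank M X := by
  rw [← Nat.cast_inj (R := ℕ∞), cast_mrank, cast_mrank, delete_eq_restrict, restrict_eRk_eq _ hX]

theorem mrank_delete_ground_of_not_isColoop [M.RankFinite] (he : ¬ M.IsColoop e) :
    mrank (M ＼ {e}) (M ＼ {e}).E = mrank M M.E := by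
  rw [delete_ground, mrank_delete subset_rfl, ← Nat.cast_inj (R := ℕ∞), cast_mrank, cast_mrank,
    eRk_ground, (not_not.1 (isColoop_iff_sdiff_not_spanning.not.1 he)).eRk_eq]

theorem mrank_contract_add_one [M.RankFinite] (he : M.IsNonloop e) (hX : X ⊆ (M ／ {e}).E) :
    mrank (M ／ {e}) X + 1 = mrank M (insert e X) := by
  obtain ⟨J, hJ⟩ := (M ／ {e}).exists_isBasis X
  have hJe : M.IsBasis (J ∪ {e}) (X ∪ {e}) := he.indep.union_isBasis_union_of_contract_isBasis hJ
  have heJ : e ∉ J := fun h => (hJ.indep.subset_ground h).2 rfl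
  rw [← Nat.cast_inj (R := ℕ∞), Nat.cast_add, cast_mrank, cast_mrank, ← hJ.encard_eq_eRk,
    ← union_singleton, ← hJe.encard_eq_eRk, encard_union_eq (disjoint_singleton_right.2 heJ),
    encard_singleton, Nat.cast_one]

theorem IsBasis'.indep_union_iff_eRk_union [M.RankFinite] {I J : Set α} (hJ : M.IsBasis' J C)
    (hCI : Disjoint C I) : M.Indep (I ∪ J) ↔ M.eRk (C ∪ I) = M.eRk C + I.encard := by
  rw [indep_iff_eRk_eq_encard, union_comm, hJ.eRk_eq_eRk_union,
    encard_union_eq (hCI.mono_left hJ.subset), hJ.encard_eq_eRk]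

theorem _root_.IsContractionBy.eq_contract [M.RankFinite] {N : Matroid α}
    (h : IsContractionBy M C N) : N = M ／ C := by
  obtain ⟨hE, hIndep⟩ := h
  refine ext_indep (by rw [hE, contract_ground]) fun I _ => ?_
  obtain ⟨J, hJ⟩ := M.exists_isBasis' C
  have hrank (hI : I.Finite) : mrank M (C ∪ I) = mrank M C + I.ncard ↔
      M.eRk (C ∪ I) = M.eRk C + I.encard := by
    rw [← Nat.cast_inj (R := ℕ∞), Nat.cast_add, cast_mrank, cast_mrank, hI.cast_ncard_eq]
  rw [hIndep, hJ.contract_indep_iff]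
  constructor
  · rintro ⟨hIE, hIfin, hr⟩
    have hCI : Disjoint C I := (subset_sdiff.1 hIE).2.symm
    exact ⟨(hJ.indep_union_iff_eRk_union hCI).2 ((hrank hIfin).1 hr), hCI⟩
  · rintro ⟨hIJ, hCI⟩
    have hI : M.Indep I := hIJ.subset subset_union_left
    exact ⟨subset_sdiff.2 ⟨hI.subset_ground, hCI.symm⟩, hI.finite,
      (hrank hI.finite).2 ((hJ.indep_union_iff_eRk_union hCI).1 hIJ)⟩

end Matroid

section DepthDecomp

open Matroid

variable {α : Type} {M N : Matroid α} {d : ℕ} {e : α}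

theorem HasDepthDecompOfDepthLE.of_mrank_le (hNE : N.E ⊆ M.E)
    (hrk : mrank N N.E = mrank M M.E) (hle : ∀ X ⊆ N.E, mrank N X ≤ mrank M X)
    (h : HasDepthDecompOfDepthLE M d) : HasDepthDecompOfDepthLE N d := by
  obtain ⟨V, root, parent, f, ⟨hV, hT, hrkM, hM⟩, hd⟩ := h
  exact ⟨V, root, parent, f, ⟨hV, hT, hrk.trans hrkM,
    fun X hX => (hle X hX).trans (hM X (hX.trans hNE))⟩, hd⟩

theorem HasDepthDecompOfDepthLE.of_mrank_add_one [M.RankFinite] (he : e ∈ M.E)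
    (hNE : N.E = M.E \ {e}) (hrk : ∀ X ⊆ N.E, mrank N X + 1 = mrank M (insert e X))
    (h : HasDepthDecompOfDepthLE M d) : HasDepthDecompOfDepthLE N d := by
  obtain ⟨V, root, parent, f, ⟨hV, hT, hrkM, hM⟩, hd⟩ := h
  have hroot : f e ≠ root := by
    intro hfe
    have hrke : mrank M {e} ≤ (nonrootAncestors root parent f {e}).ncard :=
      hM {e} (singleton_subset_iff.2 he)
    have hrkN := hrk ∅ (empty_subset _)
    rw [nonrootAncestors_singleton_of_root hT hfe, ncard_empty] at hrke
    rw [insert_empty_eq] at hrkN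
    omega
  have hw := hT.parent_ne_self hroot
  refine ⟨{v // v ≠ f e}, ⟨root, hroot.symm⟩, mergedParent hw, mergeIntoParent hw ∘ f,
    ⟨inferInstance, isRootedTree_mergedParent hT hroot, ?_, fun X hX => ?_⟩,
    (treeDepth_mergedParent_le hT hroot).trans hd⟩
  · have hcard := ncard_sdiff_singleton_add_one (s := {v | v ≠ root}) hroot (toFinite _)
    have hrkN : mrank N N.E + 1 = mrank M M.E := by
      rw [hrk N.E subset_rfl, hNE, insert_sdiff_singleton, insert_eq_of_mem he]
    rw [show {v : {v // v ≠ f e} | v ≠ ⟨root, hroot.symm⟩} = Subtype.val ⁻¹' {v | v ≠ root} by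
      ext ⟨v, hv⟩; simp, ncard_preimage_subtype_ne]
    omega
  · show mrank N X ≤ (nonrootAncestors _ _ _ X).ncard
    rw [nonrootAncestors_mergedParent hw f X hroot, ncard_preimage_subtype_ne]
    have hXM : X ⊆ M.E := hX.trans (hNE ▸ sdiff_subset)
    have hrkX := hrk X hX
    by_cases hmem : f e ∈ nonrootAncestors root parent f X
    · have hins : mrank M (insert e X) ≤ (nonrootAncestors root parent f X).ncard :=
        nonrootAncestors_insert_of_mem hmem ▸ hM (insert e X) (insert_subset he hXM)
      have hcard := ncard_sdiff_singleton_add_one hmem (toFinite _)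
      omega
    · have hle : mrank M X ≤ (nonrootAncestors root parent f X).ncard := hM X hXM
      have hinsle := mrank_insert_le (M := M) e X
      rw [sdiff_singleton_eq_self hmem]
      omega

variable [M.RankFinite]

theorem HasDepthDecompOfDepthLE.contract_of_isNonloop (he : M.IsNonloop e)
    (h : HasDepthDecompOfDepthLE M d) : HasDepthDecompOfDepthLE (M ／ {e}) d :=
  h.of_mrank_add_one he.mem_ground rfl fun _ hX => mrank_contract_add_one he hX

theorem HasDepthDecompOfDepthLE.delete (h : HasDepthDecompOfDepthLE M d) :
    HasDepthDecompOfDepthLE (M ＼ {e}) d := by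
  by_cases he : M.IsColoop e
  · rw [← contract_eq_delete_of_subset_coloops (singleton_subset_iff.2 he)]
    exact h.contract_of_isNonloop he.isNonloop
  · exact h.of_mrank_le sdiff_subset (mrank_delete_ground_of_not_isColoop he)
      fun _ hX => (mrank_delete hX).le

theorem HasDepthDecompOfDepthLE.contract (he : e ∈ M.E) (h : HasDepthDecompOfDepthLE M d) :
    HasDepthDecompOfDepthLE (M ／ {e}) d := by
  obtain hloop | hnonloop := M.isLoop_or_isNonloop e
  · rw [contract_eq_delete_of_subset_loops (singleton_subset_iff.2 hloop)]
    exact h.delete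
  · exact h.contract_of_isNonloop hnonloop

theorem MinorStep.exists_eq_contract_or_eq_delete (h : MinorStep M N) :
    ∃ e ∈ M.E, N = M ／ {e} ∨ N = M ＼ {e} := by
  obtain ⟨e, he, hN | rfl⟩ := h
  exacts [⟨e, he, .inl hN.eq_contract⟩, ⟨e, he, .inr rfl⟩]

end DepthDecomp

theorem IsMinorOf.hasDepthDecompOfDepthLE {α : Type} {M N : Matroid α} {d : ℕ}
    [hM : M.RankFinite] (hNM : IsMinorOf N M)
    (h : HasDepthDecompOfDepthLE M d) : HasDepthDecompOfDepthLE N d := by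
  induction hNM using Relation.ReflTransGen.head_induction_on generalizing hM with
  | refl => exact h
  | head hstep _ ih =>
    obtain ⟨e, he, rfl | rfl⟩ := hstep.exists_eq_contract_or_eq_delete
    exacts [ih (h.contract he), ih h.delete]

/-- If `M'` is a minor of a finite matroid `M` and `M` has a
depth-decomposition of depth at most `d`, then so does `M'`; in particular the
branch-depth of `M'` is at most the branch-depth of `M`. -/
theorem minor_hasDepthDecomp {α : Type} (M M' : Matroid α) [M.Finite]
    (hminor : IsMinorOf M' M) (d : ℕ) (hM : HasDepthDecompOfDepthLE M d) :
    HasDepthDecompOfDepthLE M' d ∧ branchDepth M' ≤ branchDepth M := by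
  have hdepths : {d | HasDepthDecompOfDepthLE M d}.Nonempty := ⟨d, hM⟩
  exact ⟨hminor.hasDepthDecompOfDepthLE hM,
    Nat.sInf_le (hminor.hasDepthDecompOfDepthLE (Nat.sInf_mem hdepths))⟩
end

section
/- Let M be a finite matroid and k ≥ 0. Let e₁, …, e_k be distinct elements of M and let C₀, C₁, …, C_k be subsets of the ground set of M such that |C_i| ≥ 3 for all 0 ≤ i ≤ k, C_{i−1} ∩ C_i = {e_i} for all 1 ≤ i ≤ k, and C_i ∩ C_j = ∅ whenever |i − j| ≥ 2. Let e₀ ∈ C₀ \ {e₁}, and for each 1 ≤ i ≤ k let e'_i ∈ C_{i−1} \ {e_{i−1}, e_i}. Define matroids by M₀ = M and M_i = M_{i−1} / (C_{i−1} \ {e_i, e'_i}) for 1 ≤ i ≤ k. If C_i is a circuit of M_i for every 0 ≤ i ≤ k, then M contains a circuit of size at least k + 3 that contains e₀. -/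
/-! Induction on `k`. Contracting `F = C₀ \ {e₁, e'₁}` makes `{e₁, e'₁}` a circuit, so the
induction hypothesis gives a circuit `Z'` of `M / F` through `e₁` with `|Z'| ≥ k + 2`. It lifts
to a circuit `D` of `M` with `Z' ⊆ D ⊆ Z' ∪ F`. If `e₀ ∈ D`, then `D` is longer than `Z'`.
Otherwise strong elimination of `C₀` and `D` at `e₁` gives a circuit `Z ∋ e₀` of `M` whose trace
`Z \ F` is dependent in `M / F` and contained in `Z' - e₁ + e'₁`. Since `e₁` and `e'₁` are
parallel in `M / F`, that set is a circuit of the same size as `Z'`. Hence `|Z| > |Z \ F| = |Z'|`.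
-/

open Set Matroid

variable {α : Type} {M N : Matroid α} {C F X Z Z' : Set α} {e f g : α}

lemma isCircuitOf_iff_isCircuit : IsCircuitOf M C ↔ M.IsCircuit C :=
  isCircuit_iff.symm

lemma indep_iff_mrank_eq_ncard (hX : X.Finite) : M.Indep X ↔ mrank M X = X.ncard := by
  have hne : {n | ∃ I ⊆ X, M.Indep I ∧ I.ncard = n}.Nonempty :=
    ⟨0, ∅, empty_subset X, M.empty_indep, ncard_empty α⟩
  have hbdd : BddAbove {n | ∃ I ⊆ X, M.Indep I ∧ I.ncard = n} :=
    ⟨X.ncard, by rintro _ ⟨I, hIX, -, rfl⟩; exact ncard_le_ncard hIX hX⟩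
  refine ⟨fun hX' ↦ le_antisymm ?_ (le_csSup hbdd ⟨X, subset_rfl, hX', rfl⟩), fun h ↦ ?_⟩
  · exact csSup_le hne (by rintro _ ⟨I, hIX, -, rfl⟩; exact ncard_le_ncard hIX hX)
  · obtain ⟨I, hIX, hI, hIcard⟩ := Nat.sSup_mem hne hbdd
    rwa [← eq_of_subset_of_ncard_le hIX (by rw [hIcard]; exact h.ge) hX]

lemma IsContractionBy.eq_contract_s9 [M.RankFinite] (h : IsContractionBy M F N) (hF : M.Indep F) :
    N = M ／ F := by
  refine ext_indep h.1 fun I hI ↦ ?_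
  have hIF : Disjoint I F := (subset_sdiff.1 (h.1 ▸ hI)).2
  rw [h.2, hF.contract_indep_iff, ← h.1, and_iff_right hI, and_iff_right hIF, union_comm I F,
    (indep_iff_mrank_eq_ncard hF.finite).1 hF]
  refine ⟨fun ⟨hIfin, hr⟩ ↦ ?_, fun hFI ↦ ?_⟩
  · rwa [indep_iff_mrank_eq_ncard (hF.finite.union hIfin),
      ncard_union_eq hIF.symm hF.finite hIfin]
  · have hIfin : I.Finite := hFI.finite.subset subset_union_right
    rw [indep_iff_mrank_eq_ncard hFI.finite, ncard_union_eq hIF.symm hF.finite hIfin] at hFI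
    exact ⟨hIfin, hFI⟩

namespace Matroid

lemma IsCircuit.insert_sdiff_singleton_of_isCircuit_pair (hZ : M.IsCircuit Z)
    (hfg : M.IsCircuit {f, g}) (hfZ : f ∈ Z) (hgZ : g ∉ Z) :
    M.IsCircuit (insert g (Z \ {f})) := by
  obtain ⟨Y, hYZ, hY⟩ := hZ.elimination hfg (fun h ↦ hgZ (h ▸ mem_insert_of_mem f rfl)) f
  replace hYZ : Y ⊆ insert g (Z \ {f}) := hYZ.trans (by grind)
  have hfY : f ∉ Y := fun h ↦ by grind
  have hgY : g ∈ Y := by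
    by_contra hgY
    exact hfY (hY.eq_of_subset_isCircuit hZ (by grind) ▸ hfZ)
  obtain ⟨Y', hY'Y, hY'⟩ := hY.elimination hfg (fun h ↦ hfY (h ▸ mem_insert f {g})) g
  have hY'Z : Y' = Z := hY'.eq_of_subset_isCircuit hZ (by grind)
  rwa [subset_antisymm hYZ (insert_subset hgY fun x hx ↦ by grind)] at hY

lemma IsCircuit.exists_isCircuit_ncard_lt_of_contract [M.Finitary] (hC : M.IsCircuit C)
    (heC : e ∈ C) (hfC : f ∈ C) (hgC : g ∈ C) (hef : e ≠ f) (heg : e ≠ g) (hfg : f ≠ g)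
    (hZ' : (M ／ (C \ {f, g})).IsCircuit Z') (hfZ' : f ∈ Z') :
    ∃ Z, M.IsCircuit Z ∧ e ∈ Z ∧ Z'.ncard < Z.ncard := by
  set F := C \ {f, g}
  have hpair : (M ／ F).IsCircuit {f, g} :=
    hC.contract_sdiff_isCircuit (insert_nonempty f {g}) (pair_subset hfC hgC)
  have heF : e ∈ F := ⟨heC, by simp [hef, heg]⟩
  by_cases hgZ' : g ∈ Z'
  · refine ⟨C, hC, heC, ?_⟩
    rw [← hpair.eq_of_subset_isCircuit hZ' (pair_subset hfZ' hgZ'), ncard_pair hfg]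
    have h3 := ncard_le_ncard (insert_subset heC (pair_subset hfC hgC)) hC.finite
    rwa [ncard_insert_of_notMem (by simp [hef, heg]), ncard_pair hfg] at h3
  obtain ⟨D, hD, hZ'D, hDZ'F⟩ := hZ'.exists_subset_isCircuit_of_contract
  have heZ' : e ∉ Z' := fun h ↦ (hZ'.subset_ground h).2 heF
  by_cases heD : e ∈ D
  · exact ⟨D, hD, heD,
      ncard_lt_ncard (ssubset_of_subset_not_subset hZ'D fun h ↦ heZ' (h heD)) hD.finite⟩
  obtain ⟨Z, hZCD, hZ, heZ⟩ := hC.strong_elimination hD hfC (hZ'D hfZ') heC heD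
  have hF : M.Indep F := hC.ssubset_indep (sdiff_ssubset_left_iff.2 ⟨f, hfC, by simp⟩)
  have hZF : (M ／ F).Dep (Z \ F) :=
    hZ.contract_dep_of_not_subset fun h ↦ hZ.not_indep (hF.subset h)
  have hZFW : Z \ F ⊆ insert g (Z' \ {f}) := fun x hx ↦ by grind
  refine ⟨Z, hZ, heZ, ?_⟩
  calc Z'.ncard = (insert g (Z' \ {f})).ncard := (ncard_exchange hgZ' hfZ').symm
    _ = (Z \ F).ncard := by
      rw [(hZ'.insert_sdiff_singleton_of_isCircuit_pair hpair hfZ' hgZ').eq_of_dep_subset hZF hZFW]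
    _ < Z.ncard := ncard_lt_ncard (sdiff_ssubset_left_iff.2 ⟨e, heZ, heF⟩) hZ.finite

end Matroid

theorem exists_isCircuit_mem_ncard_of_contraction_chain (k : ℕ) (M : Matroid α) [M.RankFinite]
    (e : Fin (k + 1) → α) (C : Fin (k + 1) → Set α) (e' : Fin k → α)
    (Ms : Fin (k + 1) → Matroid α)
    (hne : ∀ i : Fin k, e i.castSucc ≠ e i.succ) (hcard : 3 ≤ (C (Fin.last k)).ncard)
    (hmem : ∀ i : Fin k, e i.succ ∈ C i.castSucc ∩ C i.succ) (he0 : e 0 ∈ C 0)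
    (he' : ∀ i : Fin k, e' i ∈ C i.castSucc ∧ e' i ≠ e i.castSucc ∧ e' i ≠ e i.succ)
    (hMs0 : Ms 0 = M)
    (hMsStep : ∀ i : Fin k,
      IsContractionBy (Ms i.castSucc) (C i.castSucc \ {e i.succ, e' i}) (Ms i.succ))
    (hcirc : ∀ i : Fin (k + 1), (Ms i).IsCircuit (C i)) :
    ∃ Z, M.IsCircuit Z ∧ e 0 ∈ Z ∧ k + 3 ≤ Z.ncard := by
  induction k generalizing M with
  | zero => exact ⟨C 0, hMs0 ▸ hcirc 0, he0, hcard⟩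
  | succ k ih =>
    have hC0 : M.IsCircuit (C 0) := hMs0 ▸ hcirc 0
    obtain ⟨he1C0, he1C1⟩ := hmem 0
    obtain ⟨he'C0, he'e0, he'e1⟩ := he' 0
    have hstep : IsContractionBy M (C 0 \ {e 1, e' 0}) (Ms 1) := by
      simpa [hMs0] using hMsStep 0
    have hN : Ms 1 = M ／ (C 0 \ {e 1, e' 0}) :=
      hstep.eq_contract_s9 (hC0.ssubset_indep (sdiff_ssubset_left_iff.2 ⟨e 1, he1C0, by simp⟩))
    have : (Ms 1).RankFinite := hN ▸ inferInstance
    obtain ⟨Z', hZ', he1Z', hZ'card⟩ := ih (Ms 1) (e ∘ Fin.succ) (C ∘ Fin.succ) (e' ∘ Fin.succ)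
      (Ms ∘ Fin.succ) (fun i ↦ by simpa using hne i.succ) (by simpa using hcard)
      (fun i ↦ by simpa using hmem i.succ) he1C1 (fun i ↦ by simpa using he' i.succ) rfl
      (fun i ↦ by simpa using hMsStep i.succ) (fun i ↦ hcirc i.succ)
    obtain ⟨Z, hZ, he0Z, hlt⟩ :=
      hC0.exists_isCircuit_ncard_lt_of_contract he0 he1C0 he'C0 (hne 0) (Ne.symm he'e0)
        (Ne.symm he'e1) (hN ▸ hZ') he1Z'
    exact ⟨Z, hZ, he0Z, by omega⟩

theorem exists_long_circuit_of_circuit_chain_general {α : Type} (M : Matroid α) [M.Finite] (k : ℕ)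
    -- `e 0` is the element `e₀ ∈ C₀`; `e 1, …, e k` are the elements `e₁, …, e_k`.
    (e : Fin (k + 1) → α)
    -- the elements `e₁, …, e_k` are distinct
    (hinj : ∀ i j : Fin (k + 1), 1 ≤ i.val → 1 ≤ j.val → e i = e j → i = j)
    (C : Fin (k + 1) → Set α)
    -- `|C_i| ≥ 3` for all `i`
    (hcard : ∀ i : Fin (k + 1), 3 ≤ (C i).ncard)
    -- `C_{i-1} ∩ C_i = {e_i}` for `1 ≤ i ≤ k`
    (hinter : ∀ i : Fin k, C i.castSucc ∩ C i.succ = {e i.succ})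
    -- `e₀ ∈ C₀ \ {e₁}`
    (he0 : e 0 ∈ C 0) (he01 : ∀ i : Fin (k + 1), i.val = 1 → e 0 ≠ e i)
    -- `e'_i ∈ C_{i-1} \ {e_{i-1}, e_i}` for `1 ≤ i ≤ k` (with `e' i` playing `e'_{i+1}`)
    (e' : Fin k → α)
    (he' : ∀ i : Fin k, e' i ∈ C i.castSucc ∧ e' i ≠ e i.castSucc ∧ e' i ≠ e i.succ)
    -- `M₀ = M` and `M_i = M_{i-1} / (C_{i-1} \ {e_i, e'_i})` for `1 ≤ i ≤ k`
    (Ms : Fin (k + 1) → Matroid α) (hMs0 : Ms 0 = M)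
    (hMsStep : ∀ i : Fin k,
      IsContractionBy (Ms i.castSucc) (C i.castSucc \ {e i.succ, e' i}) (Ms i.succ))
    -- `C_i` is a circuit of `M_i` for every `i`
    (hcirc : ∀ i : Fin (k + 1), IsCircuitOf (Ms i) (C i)) :
    -- conclusion: `M` has a circuit of size at least `k + 3` containing `e₀`
    ∃ Z : Set α, IsCircuitOf M Z ∧ e 0 ∈ Z ∧ k + 3 ≤ Z.ncard := by
  have hne : ∀ i : Fin k, e i.castSucc ≠ e i.succ := by
    intro i h
    rcases Nat.eq_zero_or_pos i.val with h0 | hpos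
    · exact he01 i.succ (by simp [h0]) (by rwa [show i.castSucc = 0 from Fin.ext h0] at h)
    · exact Fin.castSucc_lt_succ.ne (hinj _ _ hpos (by simp) h)
  obtain ⟨Z, hZ, he0Z, hZcard⟩ := exists_isCircuit_mem_ncard_of_contraction_chain k M e C e' Ms
    hne (hcard _) (fun i ↦ by rw [hinter i]; rfl) he0 he' hMs0 hMsStep
    (fun i ↦ isCircuitOf_iff_isCircuit.1 (hcirc i))
  exact ⟨Z, isCircuitOf_iff_isCircuit.2 hZ, he0Z, hZcard⟩

/-- **Under the chain-of-circuits hypotheses, `M` has a circuit of size at least `k + 3` containing `e₀`.** -/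
theorem exists_long_circuit_of_circuit_chain {α : Type} (M : Matroid α) [M.Finite] (k : ℕ)
    -- `e 0` is the element `e₀ ∈ C₀`; `e 1, …, e k` are the elements `e₁, …, e_k`.
    (e : Fin (k + 1) → α) (he : ∀ i : Fin (k + 1), e i ∈ M.E)
    -- the elements `e₁, …, e_k` are distinct
    (hinj : ∀ i j : Fin (k + 1), 1 ≤ i.val → 1 ≤ j.val → e i = e j → i = j)
    (C : Fin (k + 1) → Set α) (hCE : ∀ i : Fin (k + 1), C i ⊆ M.E)
    -- `|C_i| ≥ 3` for all `i`
    (hcard : ∀ i : Fin (k + 1), 3 ≤ (C i).ncard)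
    -- `C_{i-1} ∩ C_i = {e_i}` for `1 ≤ i ≤ k`
    (hinter : ∀ i : Fin k, C i.castSucc ∩ C i.succ = {e i.succ})
    -- `C_i ∩ C_j = ∅` whenever `|i - j| ≥ 2`
    (hdisj : ∀ i j : Fin (k + 1), i.val + 2 ≤ j.val → C i ∩ C j = ∅)
    -- `e₀ ∈ C₀ \ {e₁}`
    (he0 : e 0 ∈ C 0) (he01 : ∀ i : Fin (k + 1), i.val = 1 → e 0 ≠ e i)
    -- `e'_i ∈ C_{i-1} \ {e_{i-1}, e_i}` for `1 ≤ i ≤ k` (with `e' i` playing `e'_{i+1}`)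
    (e' : Fin k → α)
    (he' : ∀ i : Fin k, e' i ∈ C i.castSucc ∧ e' i ≠ e i.castSucc ∧ e' i ≠ e i.succ)
    -- `M₀ = M` and `M_i = M_{i-1} / (C_{i-1} \ {e_i, e'_i})` for `1 ≤ i ≤ k`
    (Ms : Fin (k + 1) → Matroid α) (hMs0 : Ms 0 = M)
    (hMsStep : ∀ i : Fin k,
      IsContractionBy (Ms i.castSucc) (C i.castSucc \ {e i.succ, e' i}) (Ms i.succ))
    -- `C_i` is a circuit of `M_i` for every `i`
    (hcirc : ∀ i : Fin (k + 1), IsCircuitOf (Ms i) (C i)) :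
    -- conclusion: `M` has a circuit of size at least `k + 3` containing `e₀`
    ∃ Z : Set α, IsCircuitOf M Z ∧ e 0 ∈ Z ∧ k + 3 ≤ Z.ncard :=
  exists_long_circuit_of_circuit_chain_general M k e hinj C hcard hinter he0 he01 e' he' Ms hMs0
    hMsStep hcirc
end
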